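/- Let p ≥ 2 be an integer and let d ≥ 0 be a real parameter. For β ∈ S_{2p}, set S₁(β) = d·|β| + |β·γ^{-1}| + |β·δ| − p. Then: (i) if d = 0, S₁(β) ≥ 0, with equality if and only if β lies on the geodesic from δ to γ, i.e. |β·δ| + |β·γ^{-1}| = |δ·γ^{-1}|; (ii) if 0 < d < 1 and p = 2, S₁(β) ≥ 2d, with equality if and only if β ∈ {δ, γ}; (iii) if d = 1 and p = 2, S₁(β) ≥ 2, with equality if and only if β ∈ {id, δ, γ}; (iv) if 0 < d ≤ 1 and p ≥ 3, S₁(β) ≥ dp, with equality if and only if β = δ; (v) if 1 < d < 2 and p < 2/(2−d), S₁(β) ≥ 2p−2, with equality if and only if β = id; (vi) if 1 < d < 2 and p = 2/(2−d), S₁(β) ≥ 2p−2 = dp, with equality if and only if β ∈ {id, δ}; (vii) if 1 < d < 2 and p > 2/(2−d), S₁(β) ≥ dp, with equality if and only if β = δ; (viii) if d ≥ 2, S₁(β) ≥ 2p−2, with equality if and only if β = id. -/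

import Mathlib

open Equiv Filter

noncomputable section

/-- length of a permutation: `|σ| = (size of ground set) − #σ`, the minimal number of
transpositions whose product is `σ` -/
def permLength {α : Type*} [Fintype α] [DecidableEq α] (σ : Equiv.Perm α) : ℕ :=
  σ.cycleType.sum - σ.cycleType.card

/-- the involution `δ ∈ S_{2p}`: `δ(i^T) = i^B`, `δ(i^B) = i^T`, on the ground set
`{1^T,…,p^T} ⊔ {1^B,…,p^B}` -/
def deltaPerm (p : ℕ) : Equiv.Perm (Fin p ⊕ Fin p) := Equiv.sumComm (Fin p) (Fin p)

/-- the permutation `γ ∈ S_{2p}`: `γ(i^T) = (i−1)^T`, `γ(i^B) = (i+1)^B` (mod `p`),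
a product of two disjoint `p`-cycles -/
def gammaPerm (p : ℕ) : Equiv.Perm (Fin p ⊕ Fin p) :=
  Equiv.sumCongr (finRotate p)⁻¹ (finRotate p)

/-- the quantity `S₁(β) = d|β| + |βγ⁻¹| + |βδ| − p` -/
def S1 (p : ℕ) (d : ℝ) (β : Equiv.Perm (Fin p ⊕ Fin p)) : ℝ :=
  d * permLength β + (permLength (β * (gammaPerm p)⁻¹) : ℝ) +
    (permLength (β * deltaPerm p) : ℝ) - p

/-!
Write `A = |β|`, `B = |βγ⁻¹|`, `C = |βδ|`, so that `S₁(β) = dA + B + C - p`. The length is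
subadditive and invariant under inversion, and `|δ| = |δγ⁻¹| = p`, `|γ| = 2p - 2`; this gives
`B + C ≥ p`, `A + C ≥ p` and `A + B ≥ 2p - 2`, while the sign makes `A + B` and `A + C + p` even.
Subadditivity and its equality case come from linear algebra: the functions constant on the
cycles of `σ` form a space of dimension `2p - |σ|`, and `|στ| = |σ| + |τ|` forces the space of
`στ` to be the intersection of those of `σ` and `τ`, i.e. the cycles of `τ` refine those of `στ`.
Hence `A + C = p` puts every `β x` in `{x, δ x}` and `A + B = 2p - 2` makes `β` preserve the two
blocks. Together this yields `2A + B + C ≥ 3p` for `β ≠ 1`, and `A + B + C ≥ 2p` with equality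
only at `δ` (and at `1`, `γ` when `p = 2`). In every regime, `S₁(β)` minus the claimed minimum
is a nonnegative combination of these inequalities.
-/

open Module Finset

namespace Equiv.Perm

variable {α : Type*} {σ : Perm α}

theorem SameCycle.apply_eq_of_invariant [Finite α] {β : Type*} {f : α → β}
    (hf : ∀ x, f (σ x) = f x) {x y : α} (h : σ.SameCycle x y) : f y = f x := by
  obtain ⟨n, -, rfl⟩ := h.exists_pow_eq'
  clear h
  induction n with
  | zero => rfl
  | succ n ih => rw [pow_succ', mul_apply, hf, ih]

theorem SameCycle.eq_or_eq_apply_of_sq_eq_one [Finite α] (hσ : σ ^ 2 = 1) {x y : α}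
    (h : σ.SameCycle x y) : y = x ∨ y = σ x := by
  obtain ⟨n, hn, rfl⟩ := h.exists_pow_eq'
  have : n < 2 := hn.trans_le (orderOf_le_of_pow_eq_one two_pos hσ)
  interval_cases n <;> simp

theorem two_mul_card_cycleType_le_sum [Fintype α] [DecidableEq α] (σ : Perm α) :
    2 * Multiset.card σ.cycleType ≤ σ.cycleType.sum := by
  simpa [mul_comm] using Multiset.card_nsmul_le_sum fun _ => two_le_of_mem_cycleType

theorem sum_cycleType_eq_two_mul_card_iff [Fintype α] [DecidableEq α] :
    σ.cycleType.sum = 2 * Multiset.card σ.cycleType ↔ ∀ n ∈ σ.cycleType, n = 2 := by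
  refine ⟨fun h => ?_, fun h => ?_⟩
  · by_contra! hne
    obtain ⟨n, hn, hn2⟩ := hne
    have := Multiset.sum_lt_sum (s := σ.cycleType) (f := fun _ => 2) (g := id)
      (fun n hn => two_le_of_mem_cycleType hn)
      ⟨n, hn, lt_of_le_of_ne (two_le_of_mem_cycleType hn) (Ne.symm hn2)⟩
    simp only [Multiset.map_const', Multiset.sum_replicate, smul_eq_mul, Multiset.map_id] at this
    omega
  · rw [Multiset.eq_replicate_card.2 h]
    simp [mul_comm]

theorem sq_eq_one_iff_forall_mem_cycleType_eq_two [Fintype α] [DecidableEq α] :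
    σ ^ 2 = 1 ↔ ∀ n ∈ σ.cycleType, n = 2 := by
  rw [← orderOf_dvd_iff_pow_eq_one, ← lcm_cycleType, Multiset.lcm_dvd]
  exact forall₂_congr fun n hn =>
    ⟨fun h => le_antisymm (Nat.le_of_dvd two_pos h) (two_le_of_mem_cycleType hn),
      fun h => h ▸ dvd_rfl⟩

theorem sum_cycleType_of_forall_apply_ne [Fintype α] [DecidableEq α] (hσ : ∀ x, σ x ≠ x) :
    σ.cycleType.sum = Fintype.card α := by
  rw [sum_cycleType, Finset.eq_univ_of_forall fun x => mem_support.2 (hσ x), Finset.card_univ]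

theorem cycleType_sumCongr {β : Type*} [Fintype α] [DecidableEq α] [Fintype β] [DecidableEq β]
    (a : Perm α) (b : Perm β) :
    cycleType (Equiv.sumCongr a b) = a.cycleType + b.cycleType := by
  have ha : Equiv.sumCongr a (1 : Perm β) = a.extendDomain Equiv.sumIsLeft.symm := by
    ext (x | x)
    · exact (extendDomain_apply_image a Equiv.sumIsLeft.symm x).symm
    · simp [extendDomain_apply_not_subtype]
  have hb : Equiv.sumCongr (1 : Perm α) b = b.extendDomain Equiv.sumIsRight.symm := by
    ext (x | x)
    · simp [extendDomain_apply_not_subtype]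
    · exact (extendDomain_apply_image b Equiv.sumIsRight.symm x).symm
  have hd : Perm.Disjoint (Equiv.sumCongr a (1 : Perm β)) (Equiv.sumCongr 1 b) := by
    rintro (x | x) <;> simp
  have hab : Equiv.sumCongr a b = Equiv.sumCongr a 1 * Equiv.sumCongr 1 b := by
    ext (x | x) <;> rfl
  rw [hab, hd.cycleType_mul, ha, hb, cycleType_extendDomain, cycleType_extendDomain]

end Equiv.Perm

open Equiv.Perm

section Invariants

variable {α : Type*} {σ τ : Perm α}

def invariantFuns (σ : Perm α) : Submodule ℚ (α → ℚ) where
  carrier := {f | ∀ x, f (σ x) = f x}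
  add_mem' hf hg x := by simp [hf x, hg x]
  zero_mem' _ := rfl
  smul_mem' c f hf x := by simp [hf x]

theorem invariantFuns_one : invariantFuns (1 : Perm α) = ⊤ :=
  eq_top_iff.2 fun _ _ _ => rfl

theorem inf_le_invariantFuns_mul : invariantFuns σ ⊓ invariantFuns τ ≤ invariantFuns (σ * τ) :=
  fun _ hf x => (hf.1 (τ x)).trans (hf.2 x)

theorem Equiv.Perm.Disjoint.invariantFuns_mul (h : σ.Disjoint τ) :
    invariantFuns (σ * τ) = invariantFuns σ ⊓ invariantFuns τ := by
  refine le_antisymm (fun f hf => ⟨fun x => ?_, fun x => ?_⟩) inf_le_invariantFuns_mul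
  · rcases h x with hx | hx
    · rw [hx]
    · simpa [hx] using hf x
  · by_cases hx : τ x = x
    · rw [hx]
    · have : σ (τ x) = τ x := (h (τ x)).resolve_right (mt (τ.injective ·) hx)
      simpa [this] using hf x

theorem finrank_invariantFuns_add_le [Fintype α] (σ τ : Perm α) :
    finrank ℚ (invariantFuns σ) + finrank ℚ (invariantFuns τ) ≤
      Fintype.card α + finrank ℚ ↥(invariantFuns σ ⊓ invariantFuns τ) := by
  have := Submodule.finrank_sup_add_finrank_inf_eq (invariantFuns σ) (invariantFuns τ)
  have := (invariantFuns σ ⊔ invariantFuns τ).finrank_le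
  rw [finrank_fintype_fun_eq_card] at this
  omega

end Invariants

section PermLength

variable {α : Type*} [Fintype α] [DecidableEq α] {σ τ : Perm α}

theorem permLength_one : permLength (1 : Perm α) = 0 := by
  simp [permLength]

theorem permLength_inv (σ : Perm α) : permLength σ⁻¹ = permLength σ := by
  simp [permLength]

theorem permLength_add_of_cycleType_eq_add {σ₁ σ₂ : Perm α} {β : Type*} [Fintype β]
    [DecidableEq β] {π : Perm β} (h : π.cycleType = σ₁.cycleType + σ₂.cycleType) :
    permLength π = permLength σ₁ + permLength σ₂ := by
  have := two_mul_card_cycleType_le_sum σ₁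
  have := two_mul_card_cycleType_le_sum σ₂
  simp only [permLength, h, Multiset.sum_add, Multiset.card_add]
  omega

theorem Equiv.Perm.Disjoint.permLength_mul (h : σ.Disjoint τ) :
    permLength (σ * τ) = permLength σ + permLength τ :=
  permLength_add_of_cycleType_eq_add h.cycleType_mul

theorem sign_eq_neg_one_pow_permLength (σ : Perm α) : sign σ = (-1) ^ permLength σ := by
  have := two_mul_card_cycleType_le_sum σ
  rw [sign_of_cycleType, show σ.cycleType.sum + Multiset.card σ.cycleType =
    permLength σ + 2 * Multiset.card σ.cycleType by unfold permLength; omega, pow_add, pow_mul]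
  simp

theorem even_permLength_add_permLength_add_permLength_mul (σ τ : Perm α) :
    Even (permLength σ + permLength τ + permLength (σ * τ)) := by
  rw [← neg_one_pow_eq_one_iff_even (R := ℤˣ) (by decide), pow_add, pow_add,
    ← sign_eq_neg_one_pow_permLength, ← sign_eq_neg_one_pow_permLength,
    ← sign_eq_neg_one_pow_permLength, Perm.sign_mul]
  exact Int.units_mul_self _

theorem card_le_two_mul_permLength (hσ : ∀ x, σ x ≠ x) :
    Fintype.card α ≤ 2 * permLength σ := by
  have := two_mul_card_cycleType_le_sum σ
  rw [permLength, ← sum_cycleType_of_forall_apply_ne hσ]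
  omega

theorem two_mul_permLength_eq_card_iff (hσ : ∀ x, σ x ≠ x) :
    2 * permLength σ = Fintype.card α ↔ σ ^ 2 = 1 := by
  have := two_mul_card_cycleType_le_sum σ
  rw [sq_eq_one_iff_forall_mem_cycleType_eq_two, ← sum_cycleType_eq_two_mul_card_iff,
    permLength, ← sum_cycleType_of_forall_apply_ne hσ]
  omega


theorem Equiv.Perm.Disjoint.invariantFuns_sup (h : σ.Disjoint τ) :
    invariantFuns σ ⊔ invariantFuns τ = ⊤ := by
  refine eq_top_iff.2 fun f _ => Submodule.mem_sup.2
    ⟨fun x => if x ∈ σ.support then 0 else f x, fun x => ?_,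
      fun x => if x ∈ σ.support then f x else 0, fun x => ?_,
      by ext x; simp only [Pi.add_apply]; split_ifs <;> simp⟩
  · by_cases hx : x ∈ σ.support
    · simp [hx, apply_mem_support.2 hx]
    · rw [notMem_support.1 hx]
  · by_cases hx : τ x = x
    · rw [hx]
    · have hτx : τ x ∉ σ.support := notMem_support.2 ((h (τ x)).resolve_right
        (mt (τ.injective ·) hx))
      simp [hτx, notMem_support.2 ((h x).resolve_right hx)]

theorem Equiv.Perm.IsCycle.finrank_invariantFuns (hσ : σ.IsCycle) :
    finrank ℚ (invariantFuns σ) + #σ.support = Fintype.card α + 1 := by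
  obtain ⟨x₀, hx₀⟩ := hσ.nonempty_support
  let L : invariantFuns σ →ₗ[ℚ] ({x // x ∉ σ.support} → ℚ) × ℚ :=
    { toFun f := (fun y => f.1 y, f.1 x₀)
      map_add' _ _ := rfl
      map_smul' _ _ := rfl }
  have hinj : Function.Injective L := by
    intro f g hfg
    simp only [L, LinearMap.coe_mk, AddHom.coe_mk, Prod.mk.injEq, funext_iff] at hfg
    ext x
    by_cases hx : x ∈ σ.support
    · have hc := hσ.sameCycle (mem_support.1 hx₀) (mem_support.1 hx)
      rw [hc.apply_eq_of_invariant f.2, hc.apply_eq_of_invariant g.2, hfg.2]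
    · exact hfg.1 ⟨x, hx⟩
  have hsurj : Function.Surjective L := by
    rintro ⟨g, c⟩
    refine ⟨⟨fun x => if h : x ∈ σ.support then c else g ⟨x, h⟩, fun x => ?_⟩, ?_⟩
    · by_cases hx : x ∈ σ.support
      · simp [hx, apply_mem_support.2 hx]
      · rw [notMem_support.1 hx]
    · exact Prod.ext (funext fun y => dif_neg y.2) (dif_pos hx₀)
  rw [(LinearEquiv.ofBijective L ⟨hinj, hsurj⟩).finrank_eq, finrank_prod,
    finrank_fintype_fun_eq_card, finrank_self, Fintype.card_subtype_compl, Fintype.card_coe]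
  have := σ.support.card_le_univ
  omega

theorem finrank_invariantFuns_add_permLength (σ : Perm α) :
    finrank ℚ (invariantFuns σ) + permLength σ = Fintype.card α := by
  induction σ using cycle_induction_on with
  | base_one =>
    rw [invariantFuns_one, permLength_one, finrank_top, finrank_fintype_fun_eq_card, add_zero]
  | base_cycles σ hσ =>
    have := hσ.finrank_invariantFuns
    have := hσ.two_le_card_support
    simp only [permLength, hσ.cycleType, Multiset.sum_singleton, Multiset.card_singleton]
    omega
  | induction_disjoint σ τ hd _ hσ hτ =>
    have := Submodule.finrank_sup_add_finrank_inf_eq (invariantFuns σ) (invariantFuns τ)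
    rw [hd.invariantFuns_sup, finrank_top, finrank_fintype_fun_eq_card,
      ← hd.invariantFuns_mul] at this
    rw [hd.permLength_mul]
    omega

theorem permLength_mul_le (σ τ : Perm α) :
    permLength (σ * τ) ≤ permLength σ + permLength τ := by
  have := finrank_invariantFuns_add_le σ τ
  have := Submodule.finrank_mono (inf_le_invariantFuns_mul (σ := σ) (τ := τ))
  have := finrank_invariantFuns_add_permLength σ
  have := finrank_invariantFuns_add_permLength τ
  have := finrank_invariantFuns_add_permLength (σ * τ)
  omega

theorem invariantFuns_mul_of_permLength_mul_eq
    (h : permLength (σ * τ) = permLength σ + permLength τ) :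
    invariantFuns (σ * τ) = invariantFuns σ ⊓ invariantFuns τ := by
  refine (Submodule.eq_of_le_of_finrank_le inf_le_invariantFuns_mul ?_).symm
  have := finrank_invariantFuns_add_le σ τ
  have := finrank_invariantFuns_add_permLength σ
  have := finrank_invariantFuns_add_permLength τ
  have := finrank_invariantFuns_add_permLength (σ * τ)
  omega

theorem sameCycle_mul_apply_right_of_permLength_mul_eq
    (h : permLength (σ * τ) = permLength σ + permLength τ) (x : α) :
    (σ * τ).SameCycle x (τ x) := by
  let f : α → ℚ := fun y => if (σ * τ).SameCycle x y then 1 else 0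
  have hf : f ∈ invariantFuns (σ * τ) := fun y => by simp only [f, sameCycle_apply_right]
  have hfx := (invariantFuns_mul_of_permLength_mul_eq h ▸ hf).2 x
  simp only [f, if_pos (SameCycle.refl _ _)] at hfx
  simpa using hfx

theorem permLength_eq_zero : permLength σ = 0 ↔ σ = 1 := by
  refine ⟨fun h => ?_, fun h => h ▸ permLength_one⟩
  have := two_mul_card_cycleType_le_sum σ
  rw [← card_cycleType_eq_zero]
  unfold permLength at h
  omega

theorem permLength_inv_mul_le (π σ τ : Perm α) :
    permLength (σ⁻¹ * τ) ≤ permLength (π * σ) + permLength (π * τ) := by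
  have := permLength_mul_le (π * σ)⁻¹ (π * τ)
  rwa [permLength_inv, show (π * σ)⁻¹ * (π * τ) = σ⁻¹ * τ by group] at this

theorem sameCycle_inv_mul_of_permLength_inv_mul_eq {π σ τ : Perm α}
    (h : permLength (σ⁻¹ * τ) = permLength (π * σ) + permLength (π * τ)) (x : α) :
    (σ⁻¹ * τ).SameCycle x ((π * τ) x) := by
  have hστ : (π * σ)⁻¹ * (π * τ) = σ⁻¹ * τ := by group
  rw [← hστ] at h ⊢
  exact sameCycle_mul_apply_right_of_permLength_mul_eq (by rwa [permLength_inv]) x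

end PermLength

section Specific

variable {p : ℕ}

theorem card_fin_sum_fin : Fintype.card (Fin p ⊕ Fin p) = 2 * p := by
  simp [two_mul]

theorem deltaPerm_inv : (deltaPerm p)⁻¹ = deltaPerm p := rfl

theorem deltaPerm_mul_self : deltaPerm p * deltaPerm p = 1 := by
  ext (x | x) <;> rfl

theorem deltaPerm_sq : deltaPerm p ^ 2 = 1 := by
  rw [sq, deltaPerm_mul_self]

theorem isLeft_gammaPerm_apply (x : Fin p ⊕ Fin p) : (gammaPerm p x).isLeft = x.isLeft := by
  cases x <;> rfl

theorem deltaPerm_mul_gammaPerm_inv :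
    deltaPerm p * (gammaPerm p)⁻¹ = gammaPerm p * deltaPerm p := by
  ext (x | x) <;> simp [deltaPerm, gammaPerm]

theorem mul_deltaPerm_apply_ne {β : Perm (Fin p ⊕ Fin p)}
    (hβ : ∀ x, (β x).isLeft = x.isLeft) (x : Fin p ⊕ Fin p) : (β * deltaPerm p) x ≠ x := by
  intro h
  have := congrArg Sum.isLeft h
  cases x <;> simp [deltaPerm, hβ] at this

theorem permLength_deltaPerm : permLength (deltaPerm p) = p := by
  have := (two_mul_permLength_eq_card_iff (σ := deltaPerm p)
    (mul_deltaPerm_apply_ne (β := 1) fun _ => rfl)).2 deltaPerm_sq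
  rw [card_fin_sum_fin] at this
  omega

theorem permLength_deltaPerm_mul_gammaPerm_inv :
    permLength (deltaPerm p * (gammaPerm p)⁻¹) = p := by
  have hsq : (gammaPerm p * deltaPerm p) ^ 2 = 1 := by
    calc (gammaPerm p * deltaPerm p) ^ 2
        = deltaPerm p * (gammaPerm p)⁻¹ * (gammaPerm p * deltaPerm p) := by
          rw [sq, deltaPerm_mul_gammaPerm_inv]
      _ = deltaPerm p ^ 2 := by simp [sq, mul_assoc]
      _ = 1 := deltaPerm_sq
  have := (two_mul_permLength_eq_card_iff (mul_deltaPerm_apply_ne isLeft_gammaPerm_apply)).2 hsq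
  rw [card_fin_sum_fin, ← deltaPerm_mul_gammaPerm_inv] at this
  omega

theorem permLength_gammaPerm (hp : 2 ≤ p) : permLength (gammaPerm p) + 2 = 2 * p := by
  have hrot : permLength (finRotate p) = p - 1 := by
    simp [permLength, cycleType_finRotate_of_le hp]
  rw [gammaPerm, permLength_add_of_cycleType_eq_add (cycleType_sumCongr _ _), permLength_inv, hrot]
  omega

theorem le_permLength_mul_deltaPerm {β : Perm (Fin p ⊕ Fin p)}
    (hβ : ∀ x, (β x).isLeft = x.isLeft) : p ≤ permLength (β * deltaPerm p) := by
  have := card_le_two_mul_permLength (mul_deltaPerm_apply_ne hβ)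
  rw [card_fin_sum_fin] at this
  omega

theorem sq_mul_deltaPerm_eq_one {β : Perm (Fin p ⊕ Fin p)}
    (hβ : ∀ x, (β x).isLeft = x.isLeft) (h : permLength (β * deltaPerm p) = p) :
    (β * deltaPerm p) ^ 2 = 1 :=
  (two_mul_permLength_eq_card_iff (mul_deltaPerm_apply_ne hβ)).1 (by rw [h, card_fin_sum_fin])

theorem eq_one_or_eq_gammaPerm_two {β : Perm (Fin 2 ⊕ Fin 2)}
    (hβ : ∀ x, (β x).isLeft = x.isLeft) (h : (β * deltaPerm 2) ^ 2 = 1) :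
    β = 1 ∨ β = gammaPerm 2 := by
  revert β
  decide

variable {β : Perm (Fin p ⊕ Fin p)}

theorem le_permLength_mul_gammaPerm_inv_add_permLength_mul_deltaPerm (β : Perm (Fin p ⊕ Fin p)) :
    p ≤ permLength (β * (gammaPerm p)⁻¹) + permLength (β * deltaPerm p) := by
  have := permLength_inv_mul_le β (deltaPerm p) (gammaPerm p)⁻¹
  rw [deltaPerm_inv, permLength_deltaPerm_mul_gammaPerm_inv] at this
  omega

theorem le_permLength_add_permLength_mul_deltaPerm (β : Perm (Fin p ⊕ Fin p)) :
    p ≤ permLength β + permLength (β * deltaPerm p) := by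
  have := permLength_inv_mul_le β (deltaPerm p) 1
  rw [deltaPerm_inv, mul_one, mul_one, permLength_deltaPerm] at this
  omega

theorem le_permLength_add_permLength_mul_gammaPerm_inv (hp : 2 ≤ p) (β : Perm (Fin p ⊕ Fin p)) :
    2 * p ≤ permLength β + permLength (β * (gammaPerm p)⁻¹) + 2 := by
  have := permLength_inv_mul_le β (gammaPerm p)⁻¹ 1
  rw [inv_inv, mul_one, mul_one] at this
  have := permLength_gammaPerm hp
  omega

theorem apply_eq_or_eq_deltaPerm_apply_of_permLength_add_eq
    (h : permLength β + permLength (β * deltaPerm p) = p) (x : Fin p ⊕ Fin p) :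
    β x = x ∨ β x = deltaPerm p x := by
  have := sameCycle_inv_mul_of_permLength_inv_mul_eq (π := β) (σ := deltaPerm p) (τ := 1)
    (by rw [deltaPerm_inv, mul_one, mul_one, permLength_deltaPerm]; omega) x
  rw [deltaPerm_inv, mul_one, mul_one] at this
  exact this.eq_or_eq_apply_of_sq_eq_one deltaPerm_sq

theorem isLeft_apply_of_permLength_add_eq (hp : 2 ≤ p)
    (h : permLength β + permLength (β * (gammaPerm p)⁻¹) + 2 = 2 * p) (x : Fin p ⊕ Fin p) :
    (β x).isLeft = x.isLeft := by
  have := sameCycle_inv_mul_of_permLength_inv_mul_eq (π := β) (σ := (gammaPerm p)⁻¹) (τ := 1)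
    (by rw [inv_inv, mul_one, mul_one]; have := permLength_gammaPerm hp; omega) x
  rw [inv_inv, mul_one, mul_one] at this
  exact this.apply_eq_of_invariant isLeft_gammaPerm_apply

theorem even_permLength_add_permLength_mul_gammaPerm_inv (hp : 2 ≤ p)
    (β : Perm (Fin p ⊕ Fin p)) : Even (permLength β + permLength (β * (gammaPerm p)⁻¹)) := by
  obtain ⟨k, hk⟩ := even_permLength_add_permLength_add_permLength_mul β (gammaPerm p)⁻¹
  have := permLength_gammaPerm hp
  rw [permLength_inv] at hk
  exact ⟨k + 1 - p, by omega⟩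

theorem even_permLength_add_permLength_mul_deltaPerm_add (β : Perm (Fin p ⊕ Fin p)) :
    Even (permLength β + permLength (β * deltaPerm p) + p) := by
  have := even_permLength_add_permLength_add_permLength_mul β (deltaPerm p)
  rwa [permLength_deltaPerm, add_right_comm] at this

theorem eq_one_of_permLength_add_eq (hp : 2 ≤ p)
    (hδ : permLength β + permLength (β * deltaPerm p) = p)
    (hγ : permLength β + permLength (β * (gammaPerm p)⁻¹) + 2 = 2 * p) : β = 1 := by
  ext x
  refine (apply_eq_or_eq_deltaPerm_apply_of_permLength_add_eq hδ x).resolve_right fun h => ?_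
  have := isLeft_apply_of_permLength_add_eq hp hγ x
  rw [h] at this
  cases x <;> simp [deltaPerm] at this

theorem three_mul_le_of_ne_one (hp : 2 ≤ p) (hβ : β ≠ 1) :
    3 * p ≤ 2 * permLength β + permLength (β * (gammaPerm p)⁻¹) + permLength (β * deltaPerm p) := by
  have := le_permLength_add_permLength_mul_deltaPerm β
  have := le_permLength_add_permLength_mul_gammaPerm_inv hp β
  obtain ⟨k, hk⟩ := even_permLength_add_permLength_mul_gammaPerm_inv hp β
  obtain ⟨l, hl⟩ := even_permLength_add_permLength_mul_deltaPerm_add β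
  by_cases hδ : permLength β + permLength (β * deltaPerm p) = p
  · have := mt (eq_one_of_permLength_add_eq hp hδ) hβ
    omega
  · omega

theorem two_mul_le_permLength_add_add (hp : 2 ≤ p) (β : Perm (Fin p ⊕ Fin p)) :
    2 * p ≤ permLength β + permLength (β * (gammaPerm p)⁻¹) + permLength (β * deltaPerm p) ∧
      (permLength β + permLength (β * (gammaPerm p)⁻¹) + permLength (β * deltaPerm p) = 2 * p →
        β = deltaPerm p ∨ (p = 2 ∧ (β = 1 ∨ β = gammaPerm p))) := by
  have hAB := le_permLength_add_permLength_mul_gammaPerm_inv hp β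
  obtain ⟨k, hk⟩ := even_permLength_add_permLength_mul_gammaPerm_inv hp β
  by_cases hC : permLength (β * deltaPerm p) = 0
  · have hβ : β = deltaPerm p := by
      rw [← mul_inv_eq_one, deltaPerm_inv, ← permLength_eq_zero, hC]
    subst hβ
    rw [hC, permLength_deltaPerm, permLength_deltaPerm_mul_gammaPerm_inv]
    exact ⟨by omega, fun _ => Or.inl rfl⟩
  by_cases hγ : permLength β + permLength (β * (gammaPerm p)⁻¹) + 2 = 2 * p
  · have hblock := isLeft_apply_of_permLength_add_eq hp hγ
    have := le_permLength_mul_deltaPerm hblock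
    refine ⟨by omega, fun h => Or.inr ?_⟩
    obtain rfl : p = 2 := by omega
    exact ⟨rfl, eq_one_or_eq_gammaPerm_two hblock (sq_mul_deltaPerm_eq_one hblock (by omega))⟩
  · omega

end Specific

section Regimes

variable {p : ℕ} {d : ℝ}

theorem S1_one (hp : 2 ≤ p) (d : ℝ) : S1 p d 1 = 2 * p - 2 := by
  have h : (permLength (gammaPerm p) : ℝ) + 2 = 2 * p := by exact_mod_cast permLength_gammaPerm hp
  simp only [S1, permLength_one, one_mul, permLength_inv, permLength_deltaPerm]
  push_cast
  linarith

theorem S1_deltaPerm (d : ℝ) : S1 p d (deltaPerm p) = d * p := by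
  simp only [S1, permLength_deltaPerm, permLength_deltaPerm_mul_gammaPerm_inv, deltaPerm_mul_self,
    permLength_one]
  push_cast
  ring

theorem S1_gammaPerm (hp : 2 ≤ p) (d : ℝ) : S1 p d (gammaPerm p) = d * (2 * p - 2) := by
  have h : (permLength (gammaPerm p) : ℝ) + 2 = 2 * p := by exact_mod_cast permLength_gammaPerm hp
  simp only [S1, mul_inv_cancel, permLength_one, ← deltaPerm_mul_gammaPerm_inv,
    permLength_deltaPerm_mul_gammaPerm_inv]
  push_cast
  linear_combination d * h

theorem S1_zero_min (β : Perm (Fin p ⊕ Fin p)) :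
    0 ≤ S1 p 0 β ∧ (S1 p 0 β = 0 ↔ permLength (β * deltaPerm p) +
      permLength (β * (gammaPerm p)⁻¹) = permLength (deltaPerm p * (gammaPerm p)⁻¹)) := by
  have h := le_permLength_mul_gammaPerm_inv_add_permLength_mul_deltaPerm β
  rw [permLength_deltaPerm_mul_gammaPerm_inv, S1, zero_mul, zero_add, sub_nonneg, sub_eq_zero]
  constructor
  · exact_mod_cast h
  · norm_cast
    omega

theorem S1_two_min_of_lt_one (hd0 : 0 < d) (hd1 : d < 1) (β : Perm (Fin 2 ⊕ Fin 2)) :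
    2 * d ≤ S1 2 d β ∧ (S1 2 d β = 2 * d ↔ β = deltaPerm 2 ∨ β = gammaPerm 2) := by
  obtain ⟨hABC, heq⟩ := two_mul_le_permLength_add_add le_rfl β
  have hBC := le_permLength_mul_gammaPerm_inv_add_permLength_mul_deltaPerm β
  have hS : S1 2 d β = d * permLength β + permLength (β * (gammaPerm 2)⁻¹) +
      permLength (β * deltaPerm 2) - 2 := by simp [S1]
  set A := permLength β
  set B := permLength (β * (gammaPerm 2)⁻¹)
  set C := permLength (β * deltaPerm 2)
  have key : S1 2 d β - 2 * d = d * ((A + B + C : ℝ) - 4) + (1 - d) * ((B + C : ℝ) - 2) := by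
    rw [hS]; ring
  have hX : (4 : ℝ) ≤ A + B + C := by exact_mod_cast hABC
  have hY : (2 : ℝ) ≤ B + C := by exact_mod_cast hBC
  refine ⟨by nlinarith, fun h => ?_, ?_⟩
  · have h4 : A + B + C = 4 := by exact_mod_cast (show (A + B + C : ℝ) = 4 by nlinarith)
    have h2 : B + C = 2 := by exact_mod_cast (show (B + C : ℝ) = 2 by nlinarith)
    rcases heq h4 with hδ | ⟨-, rfl | hγ⟩
    · exact Or.inl hδ
    · have := permLength_gammaPerm (le_refl 2)
      simp only [B, C, one_mul, permLength_inv, permLength_deltaPerm] at h2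
      omega
    · exact Or.inr hγ
  · rintro (rfl | rfl)
    · rw [S1_deltaPerm]; ring
    · rw [S1_gammaPerm le_rfl]; ring

theorem S1_two_one_min (β : Perm (Fin 2 ⊕ Fin 2)) :
    2 ≤ S1 2 1 β ∧ (S1 2 1 β = 2 ↔ β = 1 ∨ β = deltaPerm 2 ∨ β = gammaPerm 2) := by
  obtain ⟨hABC, heq⟩ := two_mul_le_permLength_add_add le_rfl β
  have hS : S1 2 1 β = ((permLength β + permLength (β * (gammaPerm 2)⁻¹) +
      permLength (β * deltaPerm 2) : ℕ) : ℝ) - 2 := by simp [S1]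
  refine ⟨by rw [hS, le_sub_iff_add_le]; exact_mod_cast hABC, fun h => ?_, ?_⟩
  · rw [hS, sub_eq_iff_eq_add] at h
    rcases heq (by exact_mod_cast h) with hδ | ⟨-, h1 | hγ⟩
    exacts [Or.inr (Or.inl hδ), Or.inl h1, Or.inr (Or.inr hγ)]
  · rintro (rfl | rfl | rfl)
    · rw [S1_one le_rfl]; norm_num
    · rw [S1_deltaPerm]; norm_num
    · rw [S1_gammaPerm le_rfl]; norm_num

theorem S1_min_of_le_one (hp : 3 ≤ p) (hd0 : 0 < d) (hd1 : d ≤ 1) (β : Perm (Fin p ⊕ Fin p)) :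
    d * p ≤ S1 p d β ∧ (S1 p d β = d * p ↔ β = deltaPerm p) := by
  obtain ⟨hABC, heq⟩ := two_mul_le_permLength_add_add (by omega) β
  have hBC := le_permLength_mul_gammaPerm_inv_add_permLength_mul_deltaPerm β
  set A := permLength β
  set B := permLength (β * (gammaPerm p)⁻¹)
  set C := permLength (β * deltaPerm p)
  have key : S1 p d β - d * p = d * ((A + B + C : ℝ) - 2 * p) + (1 - d) * ((B + C : ℝ) - p) := by
    simp only [S1, A, B, C]; ring
  have hX : 2 * (p : ℝ) ≤ A + B + C := by exact_mod_cast hABC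
  have hY : (p : ℝ) ≤ B + C := by exact_mod_cast hBC
  refine ⟨by nlinarith, fun h => ?_, fun h => h ▸ S1_deltaPerm d⟩
  have h2p : A + B + C = 2 * p := by
    exact_mod_cast (show (A + B + C : ℝ) = 2 * p by nlinarith)
  exact (heq h2p).resolve_right fun h => by omega

theorem S1_min_of_ne_one (hp : 2 ≤ p) (hd0 : 0 < d) (hd2 : d < 2) {β : Perm (Fin p ⊕ Fin p)}
    (hβ : β ≠ 1) : d * p ≤ S1 p d β ∧ (S1 p d β = d * p → β = deltaPerm p ∨ p = 2) := by
  obtain ⟨-, heq⟩ := two_mul_le_permLength_add_add hp β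
  have hK := three_mul_le_of_ne_one hp hβ
  have hBC := le_permLength_mul_gammaPerm_inv_add_permLength_mul_deltaPerm β
  set A := permLength β
  set B := permLength (β * (gammaPerm p)⁻¹)
  set C := permLength (β * deltaPerm p)
  have key : S1 p d β - d * p =
      d / 2 * ((2 * A + B + C : ℝ) - 3 * p) + (1 - d / 2) * ((B + C : ℝ) - p) := by
    simp only [S1, A, B, C]; ring
  have hX : 3 * (p : ℝ) ≤ 2 * A + B + C := by exact_mod_cast hK
  have hY : (p : ℝ) ≤ B + C := by exact_mod_cast hBC
  refine ⟨by nlinarith, fun h => ?_⟩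
  have h3p : 2 * A + B + C = 3 * p := by
    exact_mod_cast (show (2 * A + B + C : ℝ) = 3 * p by nlinarith)
  have hp' : B + C = p := by exact_mod_cast (show (B + C : ℝ) = p by nlinarith)
  exact (heq (by omega)).imp_right And.left

theorem S1_min_of_lt_two_div (hp : 2 ≤ p) (hd1 : 1 < d) (hd2 : d < 2)
    (hreg : (p : ℝ) < 2 / (2 - d)) (β : Perm (Fin p ⊕ Fin p)) :
    2 * (p : ℝ) - 2 ≤ S1 p d β ∧ (S1 p d β = 2 * (p : ℝ) - 2 ↔ β = 1) := by
  rw [lt_div_iff₀ (by linarith)] at hreg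
  rcases eq_or_ne β 1 with rfl | hβ
  · simp [S1_one hp]
  · have := (S1_min_of_ne_one hp (by linarith) hd2 hβ).1
    exact ⟨by nlinarith, iff_of_false (by nlinarith) hβ⟩

theorem S1_min_of_eq_two_div (hp : 2 ≤ p) (hd1 : 1 < d) (hd2 : d < 2)
    (hreg : (p : ℝ) = 2 / (2 - d)) (β : Perm (Fin p ⊕ Fin p)) :
    2 * (p : ℝ) - 2 = d * p ∧ 2 * (p : ℝ) - 2 ≤ S1 p d β ∧
      (S1 p d β = 2 * (p : ℝ) - 2 ↔ β = 1 ∨ β = deltaPerm p) := by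
  rw [eq_div_iff (by linarith)] at hreg
  have hdp : 2 * (p : ℝ) - 2 = d * p := by linarith
  have hp2 : p ≠ 2 := by rintro rfl; norm_num at hreg; linarith
  refine ⟨hdp, ?_⟩
  rcases eq_or_ne β 1 with rfl | hβ
  · simp [S1_one hp]
  · obtain ⟨hle, heq⟩ := S1_min_of_ne_one hp (by linarith) hd2 hβ
    refine ⟨hdp ▸ hle, ⟨fun h => Or.inr ((heq (hdp ▸ h)).resolve_right hp2), ?_⟩⟩
    rintro (rfl | rfl)
    exacts [absurd rfl hβ, hdp ▸ S1_deltaPerm d]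

theorem S1_min_of_two_div_lt (hp : 2 ≤ p) (hd1 : 1 < d) (hd2 : d < 2)
    (hreg : 2 / (2 - d) < (p : ℝ)) (β : Perm (Fin p ⊕ Fin p)) :
    d * p ≤ S1 p d β ∧ (S1 p d β = d * p ↔ β = deltaPerm p) := by
  rw [div_lt_iff₀ (by linarith)] at hreg
  have hp2 : p ≠ 2 := by rintro rfl; norm_num at hreg; linarith
  rcases eq_or_ne β 1 with rfl | hβ
  · rw [S1_one hp]
    refine ⟨by nlinarith, iff_of_false (by nlinarith) fun h => ?_⟩
    have := permLength_deltaPerm (p := p)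
    rw [← h, permLength_one] at this
    omega
  · obtain ⟨hle, heq⟩ := S1_min_of_ne_one hp (by linarith) hd2 hβ
    exact ⟨hle, fun h => (heq h).resolve_right hp2, fun h => h ▸ S1_deltaPerm d⟩

theorem S1_min_of_two_le (hp : 2 ≤ p) (hd : 2 ≤ d) (β : Perm (Fin p ⊕ Fin p)) :
    2 * (p : ℝ) - 2 ≤ S1 p d β ∧ (S1 p d β = 2 * (p : ℝ) - 2 ↔ β = 1) := by
  rcases eq_or_ne β 1 with rfl | hβ
  · simp [S1_one hp]
  have hK := three_mul_le_of_ne_one hp hβ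
  set A := permLength β
  set B := permLength (β * (gammaPerm p)⁻¹)
  set C := permLength (β * deltaPerm p)
  have key : S1 p d β - (2 * p - 2) = (d - 2) * A + ((2 * A + B + C : ℝ) - 3 * p) + 2 := by
    simp only [S1, A, B, C]; ring
  have hX : 3 * (p : ℝ) ≤ 2 * A + B + C := by exact_mod_cast hK
  have : 0 ≤ (d - 2) * A := mul_nonneg (by linarith) (Nat.cast_nonneg _)
  exact ⟨by linarith, iff_of_false (by linarith) hβ⟩

end Regimes

theorem S1_minimization_general (p : ℕ) (hp : 2 ≤ p) (d : ℝ) :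
    (d = 0 → ∀ β : Equiv.Perm (Fin p ⊕ Fin p),
      (0 : ℝ) ≤ S1 p d β ∧
        (S1 p d β = 0 ↔
          permLength (β * deltaPerm p) + permLength (β * (gammaPerm p)⁻¹) =
            permLength (deltaPerm p * (gammaPerm p)⁻¹))) ∧
    ((0 < d ∧ d < 1 ∧ p = 2) → ∀ β : Equiv.Perm (Fin p ⊕ Fin p),
      2 * d ≤ S1 p d β ∧
        (S1 p d β = 2 * d ↔ (β = deltaPerm p ∨ β = gammaPerm p))) ∧
    ((d = 1 ∧ p = 2) → ∀ β : Equiv.Perm (Fin p ⊕ Fin p),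
      (2 : ℝ) ≤ S1 p d β ∧
        (S1 p d β = 2 ↔ (β = 1 ∨ β = deltaPerm p ∨ β = gammaPerm p))) ∧
    ((0 < d ∧ d ≤ 1 ∧ 3 ≤ p) → ∀ β : Equiv.Perm (Fin p ⊕ Fin p),
      d * p ≤ S1 p d β ∧ (S1 p d β = d * p ↔ β = deltaPerm p)) ∧
    ((1 < d ∧ d < 2 ∧ (p : ℝ) < 2 / (2 - d)) → ∀ β : Equiv.Perm (Fin p ⊕ Fin p),
      2 * (p : ℝ) - 2 ≤ S1 p d β ∧ (S1 p d β = 2 * (p : ℝ) - 2 ↔ β = 1)) ∧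
    ((1 < d ∧ d < 2 ∧ (p : ℝ) = 2 / (2 - d)) → ∀ β : Equiv.Perm (Fin p ⊕ Fin p),
      (2 * (p : ℝ) - 2 = d * p) ∧ 2 * (p : ℝ) - 2 ≤ S1 p d β ∧
        (S1 p d β = 2 * (p : ℝ) - 2 ↔ (β = 1 ∨ β = deltaPerm p))) ∧
    ((1 < d ∧ d < 2 ∧ 2 / (2 - d) < (p : ℝ)) → ∀ β : Equiv.Perm (Fin p ⊕ Fin p),
      d * p ≤ S1 p d β ∧ (S1 p d β = d * p ↔ β = deltaPerm p)) ∧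
    (2 ≤ d → ∀ β : Equiv.Perm (Fin p ⊕ Fin p),
      2 * (p : ℝ) - 2 ≤ S1 p d β ∧ (S1 p d β = 2 * (p : ℝ) - 2 ↔ β = 1)) := by
  refine ⟨?_, ?_, ?_, ?_, ?_, ?_, ?_, ?_⟩
  · rintro rfl
    exact S1_zero_min
  · rintro ⟨hd0, hd1, rfl⟩
    exact S1_two_min_of_lt_one hd0 hd1
  · rintro ⟨rfl, rfl⟩
    exact S1_two_one_min
  · rintro ⟨hd0, hd1, hp3⟩
    exact S1_min_of_le_one hp3 hd0 hd1
  · rintro ⟨hd1, hd2, hreg⟩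
    exact S1_min_of_lt_two_div hp hd1 hd2 hreg
  · rintro ⟨hd1, hd2, hreg⟩
    exact S1_min_of_eq_two_div hp hd1 hd2 hreg
  · rintro ⟨hd1, hd2, hreg⟩
    exact S1_min_of_two_div_lt hp hd1 hd2 hreg
  · intro hd
    exact S1_min_of_two_le hp hd

/-- **Minimization of `S₁` (Table 2).** For `p ≥ 2` and `d ≥ 0`, the minimum of
`S₁(β) = d|β| + |βγ⁻¹| + |βδ| − p` over `β ∈ S_{2p}` and its equality cases, in each
of the regimes of `d` (and `p`). -/
theorem S1_minimization (p : ℕ) (hp : 2 ≤ p) (d : ℝ) (hd : 0 ≤ d) :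
    (d = 0 → ∀ β : Equiv.Perm (Fin p ⊕ Fin p),
      (0 : ℝ) ≤ S1 p d β ∧
        (S1 p d β = 0 ↔
          permLength (β * deltaPerm p) + permLength (β * (gammaPerm p)⁻¹) =
            permLength (deltaPerm p * (gammaPerm p)⁻¹))) ∧
    ((0 < d ∧ d < 1 ∧ p = 2) → ∀ β : Equiv.Perm (Fin p ⊕ Fin p),
      2 * d ≤ S1 p d β ∧
        (S1 p d β = 2 * d ↔ (β = deltaPerm p ∨ β = gammaPerm p))) ∧
    ((d = 1 ∧ p = 2) → ∀ β : Equiv.Perm (Fin p ⊕ Fin p),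
      (2 : ℝ) ≤ S1 p d β ∧
        (S1 p d β = 2 ↔ (β = 1 ∨ β = deltaPerm p ∨ β = gammaPerm p))) ∧
    ((0 < d ∧ d ≤ 1 ∧ 3 ≤ p) → ∀ β : Equiv.Perm (Fin p ⊕ Fin p),
      d * p ≤ S1 p d β ∧ (S1 p d β = d * p ↔ β = deltaPerm p)) ∧
    ((1 < d ∧ d < 2 ∧ (p : ℝ) < 2 / (2 - d)) → ∀ β : Equiv.Perm (Fin p ⊕ Fin p),
      2 * (p : ℝ) - 2 ≤ S1 p d β ∧ (S1 p d β = 2 * (p : ℝ) - 2 ↔ β = 1)) ∧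
    ((1 < d ∧ d < 2 ∧ (p : ℝ) = 2 / (2 - d)) → ∀ β : Equiv.Perm (Fin p ⊕ Fin p),
      (2 * (p : ℝ) - 2 = d * p) ∧ 2 * (p : ℝ) - 2 ≤ S1 p d β ∧
        (S1 p d β = 2 * (p : ℝ) - 2 ↔ (β = 1 ∨ β = deltaPerm p))) ∧
    ((1 < d ∧ d < 2 ∧ 2 / (2 - d) < (p : ℝ)) → ∀ β : Equiv.Perm (Fin p ⊕ Fin p),
      d * p ≤ S1 p d β ∧ (S1 p d β = d * p ↔ β = deltaPerm p)) ∧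
    (2 ≤ d → ∀ β : Equiv.Perm (Fin p ⊕ Fin p),
      2 * (p : ℝ) - 2 ≤ S1 p d β ∧ (S1 p d β = 2 * (p : ℝ) - 2 ↔ β = 1)) :=
  S1_minimization_general p hp d
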